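/- Fix λ = (λⱼ)_{j=0}^{m} with λⱼ ∈ (−1,1)\{0} and a probability vector p = (pⱼ)_{j=0}^{m} with positive entries. For t ∈ (ℝ^d)^m let μ_t be the self-similar measure of Φ_t and p, and let ν_t^{(n)} = Σ_{w∈Λⁿ} p_w δ_{φ_{t,w}} be the induced measure on the affine group. Then dim μ_t ≤ (1/(χn)) H(ν_t^{(n)}) for every n ≥ 1, where χ = −Σⱼ pⱼ log|λⱼ|. -/

import Mathlib

open MeasureTheory

/-- Composition along a word `w` of the IFS on `ℝ^d` with maps `φ_{t,0}(x) = lam 0 • x` and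
`φ_{t,j}(x) = lam j • x + t j` for `1 ≤ j ≤ m`. -/
def compIFSd {d m n : ℕ} (lam : Fin (m + 1) → ℝ) (t : Fin m → Fin d → ℝ)
    (w : Fin n → Fin (m + 1)) : (Fin d → ℝ) → (Fin d → ℝ) :=
  (List.ofFn w).foldr (fun j f => (fun x => lam j • x + Fin.cases 0 t j) ∘ f) id

/-- Shannon entropy (base 2) of the pushforward of the weights `p` by the map `key`. -/
noncomputable def pushEntropy {α β : Type*} [Fintype α] (p : α → ℝ) (key : α → β) : ℝ :=
  letI := Classical.decEq β
  ∑ b ∈ Finset.image key Finset.univ,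
    -((∑ a ∈ Finset.univ.filter fun a => key a = b, p a) *
      Real.logb 2 (∑ a ∈ Finset.univ.filter fun a => key a = b, p a))

/-!
Let `ν` be the law of `φ_{t,w}` under `p_w`, `w ∈ Λⁿ`, so that `μ = Σ_w p_w φ_{t,w}μ`. Grouping the
words with equal maps gives `μ(φ(B)) ≥ ν{φ} μ(B)` for every atom `φ` of `ν`, and iterating,
`μ(ψ₁ ∘ ⋯ ∘ ψ_k (B)) ≥ ν{ψ₁} ⋯ ν{ψ_k} μ(B)`. By the weak law of large numbers, for most strings
`ψ₁, …, ψ_k` of atoms this product is at least `2^{-k(H(ν)+ε)}`, while the contraction ratio of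
`ψ₁ ∘ ⋯ ∘ ψ_k` is at most `2^{-k(nχ-ε)}`. Taking for `B` a ball of mass `≥ 1/2`, the images of `B`
under these typical compositions cover mass `≥ 1/4` for every large `k`, so a point where the
local dimension is `D` lies in such an image for infinitely many `k`. There a ball of radius
comparable to the contraction ratio has mass `≥ 2^{-k(H(ν)+ε)}/2`, whence
`D ≤ (H(ν)+ε)/(nχ-ε)`.
-/

open Filter Topology Finset
open scoped ENNReal

namespace SelfSimilar

variable {E J : Type*}

def wordComp (f : J → E → E) {k : ℕ} (σ : Fin k → J) : E → E :=
  (List.ofFn σ).foldr (fun j F => f j ∘ F) id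

theorem wordComp_succ (f : J → E → E) {k : ℕ} (σ : Fin (k + 1) → J) :
    wordComp f σ = f (σ 0) ∘ wordComp f (Fin.tail σ) := by
  simp only [wordComp, List.ofFn_succ, List.foldr_cons]
  rfl

theorem wordComp_cons (f : J → E → E) {k : ℕ} (j : J) (σ : Fin k → J) :
    wordComp f (Fin.cons j σ : Fin (k + 1) → J) = f j ∘ wordComp f σ := by
  simp [wordComp_succ]

theorem sum_pi_fin_succ [Fintype J] {M : Type*} [AddCommMonoid M] {k : ℕ}
    (F : (Fin (k + 1) → J) → M) :
    ∑ σ : Fin (k + 1) → J, F σ = ∑ j, ∑ σ : Fin k → J, F (Fin.cons j σ) := by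
  rw [← (Fin.consEquiv fun _ => J).sum_comp, Fintype.sum_prod_type]
  rfl

section WordWeights

variable [Fintype J] {P : J → ℝ}

theorem sum_prod_eq_one (hP1 : ∑ j, P j = 1) (k : ℕ) : ∑ σ : Fin k → J, ∏ i, P (σ i) = 1 := by
  rw [← Fintype.sum_pow, hP1, one_pow]

theorem sum_prod_mul_fin_succ (k : ℕ) (F : (Fin (k + 1) → J) → ℝ) :
    ∑ σ : Fin (k + 1) → J, (∏ i, P (σ i)) * F σ
      = ∑ j, P j * ∑ σ : Fin k → J, (∏ i, P (σ i)) * F (Fin.cons j σ) := by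
  simp only [sum_pi_fin_succ, Fin.prod_univ_succ, Fin.cons_zero, Fin.cons_succ, mul_sum,
    mul_assoc]

theorem sum_prod_mul_sum (hP1 : ∑ j, P j = 1) (X : J → ℝ) (k : ℕ) :
    ∑ σ : Fin k → J, (∏ i, P (σ i)) * ∑ i, X (σ i) = k * ∑ j, P j * X j := by
  induction k with
  | zero => simp
  | succ k ih =>
    have step : ∀ j, ∑ σ : Fin k → J, (∏ i, P (σ i)) * ∑ i, X ((Fin.cons j σ : Fin (k + 1) → J) i)
        = X j + k * ∑ j, P j * X j := by
      intro j
      simp only [Fin.sum_univ_succ, Fin.cons_zero, Fin.cons_succ, mul_add, sum_add_distrib,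
        ← sum_mul, sum_prod_eq_one hP1, ih, one_mul]
    rw [sum_prod_mul_fin_succ]
    simp only [step, mul_add, sum_add_distrib, ← sum_mul, hP1]
    push_cast
    ring

theorem sum_prod_mul_sum_sq (hP1 : ∑ j, P j = 1) {Y : J → ℝ} (hY : ∑ j, P j * Y j = 0)
    (k : ℕ) : ∑ σ : Fin k → J, (∏ i, P (σ i)) * (∑ i, Y (σ i)) ^ 2
      = k * ∑ j, P j * Y j ^ 2 := by
  induction k with
  | zero => simp
  | succ k ih =>
    have step : ∀ j, ∑ σ : Fin k → J,
        (∏ i, P (σ i)) * (∑ i, Y ((Fin.cons j σ : Fin (k + 1) → J) i)) ^ 2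
        = Y j ^ 2 + k * ∑ j, P j * Y j ^ 2 := by
      intro j
      have expand : ∀ σ : Fin k → J, (∏ i, P (σ i)) * (Y j + ∑ i, Y (σ i)) ^ 2
          = (∏ i, P (σ i)) * Y j ^ 2 + 2 * Y j * ((∏ i, P (σ i)) * ∑ i, Y (σ i))
            + (∏ i, P (σ i)) * (∑ i, Y (σ i)) ^ 2 := fun σ => by ring
      simp only [Fin.sum_univ_succ, Fin.cons_zero, Fin.cons_succ, expand, sum_add_distrib,
        ← sum_mul, ← mul_sum, sum_prod_eq_one hP1, sum_prod_mul_sum hP1, hY, ih]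
      ring
    rw [sum_prod_mul_fin_succ]
    simp only [step, mul_add, sum_add_distrib, ← sum_mul, hP1]
    push_cast
    ring

noncomputable def typicalWords (P X : J → ℝ) (k : ℕ) (ε : ℝ) : Finset (Fin k → J) :=
  {σ | |∑ i, X (σ i) - k * ∑ j, P j * X j| ≤ k * ε}

theorem mem_typicalWords {X : J → ℝ} {k : ℕ} {ε : ℝ} {σ : Fin k → J} :
    σ ∈ typicalWords P X k ε ↔ |∑ i, X (σ i) - k * ∑ j, P j * X j| ≤ k * ε := by
  simp [typicalWords]

theorem sum_prod_compl_typicalWords_le [DecidableEq J] (hP : ∀ j, 0 ≤ P j)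
    (hP1 : ∑ j, P j = 1) (X : J → ℝ) {k : ℕ} (hk : 0 < k) {ε : ℝ} (hε : 0 < ε) :
    ∑ σ ∈ (typicalWords P X k ε)ᶜ, ∏ i, P (σ i)
      ≤ (∑ j, P j * (X j - ∑ j', P j' * X j') ^ 2) / ε ^ 2 / k := by
  set m := ∑ j', P j' * X j'
  set Y := fun j => X j - m
  have hY : ∑ j, P j * Y j = 0 := by
    simp only [Y, mul_sub, sum_sub_distrib, ← sum_mul, hP1, m]
    ring
  have hsum : ∀ σ : Fin k → J, ∑ i, X (σ i) - k * m = ∑ i, Y (σ i) := by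
    simp [Y, sum_sub_distrib]
  have hkε : 0 < (k : ℝ) * ε := by positivity
  have hPσ : ∀ σ : Fin k → J, 0 ≤ ∏ i, P (σ i) := fun σ => prod_nonneg fun i _ => hP _
  calc ∑ σ ∈ (typicalWords P X k ε)ᶜ, ∏ i, P (σ i)
      ≤ ∑ σ ∈ (typicalWords P X k ε)ᶜ, (∏ i, P (σ i)) * ((∑ i, Y (σ i)) ^ 2 / (k * ε) ^ 2) := by
        refine sum_le_sum fun σ hσ => le_mul_of_one_le_right (hPσ σ) ?_
        rw [mem_compl, mem_typicalWords, not_le, hsum] at hσ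
        rw [one_le_div (by positivity), ← sq_abs (∑ i, Y (σ i))]
        exact pow_le_pow_left₀ hkε.le hσ.le 2
    _ ≤ ∑ σ : Fin k → J, (∏ i, P (σ i)) * ((∑ i, Y (σ i)) ^ 2 / (k * ε) ^ 2) :=
        sum_le_sum_of_subset_of_nonneg (subset_univ _) fun σ _ _ => by
          have := hPσ σ
          positivity
    _ = (∑ j, P j * Y j ^ 2) / ε ^ 2 / k := by
        simp only [← mul_div_assoc, ← sum_div, sum_prod_mul_sum_sq hP1 hY]
        field_simp

theorem tendsto_sum_prod_compl_typicalWords [DecidableEq J] (hP : ∀ j, 0 ≤ P j)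
    (hP1 : ∑ j, P j = 1) (X : J → ℝ) {ε : ℝ} (hε : 0 < ε) :
    Tendsto (fun k => ∑ σ ∈ (typicalWords P X k ε)ᶜ, ∏ i, P (σ i)) atTop (𝓝 0) :=
  squeeze_zero' (Eventually.of_forall fun _ => sum_nonneg fun _ _ => prod_nonneg fun _ _ => hP _)
    ((eventually_gt_atTop 0).mono fun _ hk => sum_prod_compl_typicalWords_le hP hP1 X hk hε)
    (tendsto_const_div_atTop_nhds_zero_nat _)

theorem tendsto_sum_prod_inter_typicalWords [DecidableEq J] (hP : ∀ j, 0 ≤ P j)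
    (hP1 : ∑ j, P j = 1) (X Y : J → ℝ) {ε : ℝ} (hε : 0 < ε) :
    Tendsto (fun k => ∑ σ ∈ typicalWords P X k ε ∩ typicalWords P Y k ε, ∏ i, P (σ i))
      atTop (𝓝 1) := by
  have hPσ {k : ℕ} (A : Finset (Fin k → J)) : 0 ≤ ∑ σ ∈ A, ∏ i, P (σ i) :=
    sum_nonneg fun _ _ => prod_nonneg fun _ _ => hP _
  have hcompl (k : ℕ) : ∑ σ ∈ (typicalWords P X k ε ∩ typicalWords P Y k ε)ᶜ, ∏ i, P (σ i)
      ≤ ∑ σ ∈ (typicalWords P X k ε)ᶜ, ∏ i, P (σ i)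
        + ∑ σ ∈ (typicalWords P Y k ε)ᶜ, ∏ i, P (σ i) := by
    rw [compl_inter, ← sum_union_inter]
    exact le_add_of_nonneg_right (hPσ _)
  have hsum := (tendsto_sum_prod_compl_typicalWords hP hP1 X hε).add
    (tendsto_sum_prod_compl_typicalWords hP hP1 Y hε)
  rw [add_zero] at hsum
  have hlim := (squeeze_zero (fun k => hPσ _) hcompl hsum).const_sub 1
  rw [sub_zero] at hlim
  refine hlim.congr fun k => ?_
  rw [← sum_prod_eq_one hP1 k, ← sum_compl_add_sum (typicalWords P X k ε ∩ _)]
  ring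

end WordWeights

section Similarity

variable [PseudoMetricSpace E]

theorem dist_wordComp {r : J → ℝ} {g : J → E → E}
    (hg : ∀ j x y, dist (g j x) (g j y) = r j * dist x y) {k : ℕ} (σ : Fin k → J) (x y : E) :
    dist (wordComp g σ x) (wordComp g σ y) = (∏ i, r (σ i)) * dist x y := by
  induction k with
  | zero => simp [wordComp]
  | succ k ih =>
    rw [wordComp_succ, Fin.prod_univ_succ, Function.comp_apply, Function.comp_apply, hg, ih,
      mul_assoc]
    rfl

theorem continuous_of_dist_eq_mul {f : E → E} {ρ : ℝ}
    (hf : ∀ x y, dist (f x) (f y) = ρ * dist x y) : Continuous f :=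
  (LipschitzWith.of_dist_le' fun x y => (hf x y).le).continuous

theorem closedBall_subset_preimage_ball {f : E → E} {ρ R : ℝ}
    (hf : ∀ x y, dist (f x) (f y) = ρ * dist x y) (hρ : 0 < ρ) (hR : 0 < R) {x x₀ : E}
    (hx : dist x (f x₀) ≤ R * ρ) : Metric.closedBall x₀ R ⊆ f ⁻¹' Metric.ball x (3 * R * ρ) := by
  intro y hy
  have hfy : dist (f y) (f x₀) ≤ R * ρ := by
    rw [hf, mul_comm R]
    exact mul_le_mul_of_nonneg_left hy hρ.le
  have := dist_triangle_right (f y) x (f x₀)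
  simp only [Set.mem_preimage, Metric.mem_ball, dist_comm (f y)] at *
  nlinarith [mul_pos hρ hR]

end Similarity

section Measure

variable [MeasurableSpace E] {μ : Measure E} {P : J → ℝ} {g : J → E → E}

theorem measurable_wordComp (hg : ∀ j, Measurable (g j)) {k : ℕ} (σ : Fin k → J) :
    Measurable (wordComp g σ) := by
  induction k with
  | zero => exact measurable_id
  | succ k ih => rw [wordComp_succ]; exact (hg _).comp (ih _)

theorem ofReal_prod_mul_measure_preimage_wordComp_le {Q : J → ℝ} (hQ : ∀ j, 0 ≤ Q j)
    (hg : ∀ j, Measurable (g j))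
    (hQg : ∀ j {S : Set E}, MeasurableSet S → ENNReal.ofReal (Q j) * μ (g j ⁻¹' S) ≤ μ S)
    {k : ℕ} (σ : Fin k → J) {S : Set E} (hS : MeasurableSet S) :
    ENNReal.ofReal (∏ i, Q (σ i)) * μ (wordComp g σ ⁻¹' S) ≤ μ S := by
  induction k generalizing S with
  | zero => simp [wordComp]
  | succ k ih =>
    rw [wordComp_succ, Fin.prod_univ_succ, ENNReal.ofReal_mul (hQ _), Set.preimage_comp,
      mul_assoc]
    exact (mul_le_mul_right (ih _ (hg _ hS)) _).trans (hQg _ hS)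

variable [Fintype J]

theorem measure_eq_sum_preimage (hg : ∀ j, Measurable (g j))
    (hμ : μ = ∑ j, ENNReal.ofReal (P j) • μ.map (g j)) {S : Set E} (hS : MeasurableSet S) :
    μ S = ∑ j, ENNReal.ofReal (P j) * μ (g j ⁻¹' S) := by
  conv_lhs => rw [hμ]
  simp only [Measure.coe_finsetSum, Finset.sum_apply, Measure.smul_apply,
    Measure.map_apply (hg _) hS, smul_eq_mul]

theorem measure_eq_sum_preimage_wordComp (hP : ∀ j, 0 ≤ P j) (hg : ∀ j, Measurable (g j))
    (hμ : μ = ∑ j, ENNReal.ofReal (P j) • μ.map (g j)) (k : ℕ) {S : Set E}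
    (hS : MeasurableSet S) :
    μ S = ∑ σ : Fin k → J, ENNReal.ofReal (∏ i, P (σ i)) * μ (wordComp g σ ⁻¹' S) := by
  induction k generalizing S with
  | zero => simp [wordComp]
  | succ k ih =>
    rw [sum_pi_fin_succ, measure_eq_sum_preimage hg hμ hS]
    refine sum_congr rfl fun j _ => ?_
    simp only [wordComp_cons, Fin.prod_univ_succ, Fin.cons_zero, Fin.cons_succ,
      ENNReal.ofReal_mul (hP j), Set.preimage_comp, mul_assoc, ← mul_sum, ← ih (hg j hS)]

theorem eq_sum_map_wordComp (hP : ∀ j, 0 ≤ P j) (hg : ∀ j, Measurable (g j))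
    (hμ : μ = ∑ j, ENNReal.ofReal (P j) • μ.map (g j)) (k : ℕ) :
    μ = ∑ σ : Fin k → J, ENNReal.ofReal (∏ i, P (σ i)) • μ.map (wordComp g σ) := by
  ext S hS
  rw [measure_eq_sum_preimage_wordComp hP hg hμ k hS]
  simp only [Measure.coe_finsetSum, Finset.sum_apply, Measure.smul_apply,
    Measure.map_apply (measurable_wordComp hg _) hS, smul_eq_mul]

theorem mul_measure_le_measure_biUnion {I : Type*} [Fintype I] {c : I → ℝ≥0∞} {f : I → E → E}
    (hμ : ∀ S, MeasurableSet S → μ S = ∑ i, c i * μ (f i ⁻¹' S)) (G : Finset I) {A : Set E}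
    {T : I → Set E} (hT : ∀ i, MeasurableSet (T i)) (hAT : ∀ i ∈ G, A ⊆ f i ⁻¹' T i) :
    (∑ i ∈ G, c i) * μ A ≤ μ (⋃ i ∈ G, T i) := by
  rw [hμ _ (G.measurableSet_biUnion fun i _ => hT i), sum_mul]
  calc ∑ i ∈ G, c i * μ A ≤ ∑ i ∈ G, c i * μ (f i ⁻¹' ⋃ i ∈ G, T i) :=
        sum_le_sum fun i hi => by
          gcongr
          exact (hAT i hi).trans (Set.preimage_mono (Set.subset_biUnion_of_mem hi))
    _ ≤ _ := sum_le_sum_of_subset (subset_univ G)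

end Measure

theorem exists_frequently_mem_of_ae {α : Type*} [MeasurableSpace α] {μ : Measure α}
    [IsFiniteMeasure μ] {S : ℕ → Set α} (hS : ∀ k, MeasurableSet (S k)) {c : ℝ≥0∞} (hc : c ≠ 0)
    (hμS : ∀ᶠ k in atTop, c ≤ μ (S k)) {p : α → Prop} (hp : ∀ᵐ x ∂μ, p x) :
    ∃ x, p x ∧ ∃ᶠ k in atTop, x ∈ S k := by
  by_contra! h
  have hlim : Tendsto (fun k => μ (S k)) atTop (𝓝 0) := by
    simpa using tendsto_measure_of_ae_tendsto_indicator_of_isFiniteMeasure atTop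
      MeasurableSet.empty hS (hp.mono fun x hx => by simpa using h x hx)
  exact hc (nonpos_iff_eq_zero.1 (ge_of_tendsto hlim hμS))

theorem exists_lt_measure_closedBall [PseudoMetricSpace E] [MeasurableSpace E] {μ : Measure E}
    {c : ℝ≥0∞} (hc : c < μ Set.univ) : ∃ x₀ : E, ∃ R > 0, c < μ (Metric.closedBall x₀ R) := by
  obtain ⟨x₀, -⟩ := nonempty_of_measure_ne_zero (ne_bot_of_gt hc)
  have hlim := tendsto_measure_iUnion_atTop (μ := μ)
    fun a b hab => Metric.closedBall_subset_closedBall (x := x₀) (Nat.cast_le.2 hab)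
  rw [Metric.iUnion_closedBall_nat] at hlim
  obtain ⟨n, hn, hn1⟩ := ((hlim.eventually (lt_mem_nhds hc)).and (eventually_ge_atTop 1)).exists
  exact ⟨x₀, n, by exact_mod_cast hn1, hn⟩

theorem le_div_of_frequently_logb_le {m : ℝ → ℝ} {D a b C : ℝ}
    (hm : Tendsto (fun δ => Real.logb 2 (m δ) / Real.logb 2 δ) (𝓝[>] 0) (𝓝 D)) (ha : 0 < a)
    (hb : 0 ≤ b) (hfreq : ∃ᶠ k : ℕ in atTop, ∃ s > 0,
      Real.logb 2 s ≤ C - k * a ∧ -(C + k * b) ≤ Real.logb 2 (m s)) :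
    D ≤ b / a := by
  -- Otherwise the ratio at the radii `s` would exceed some `D' > b / a`, which bounds `k`.
  by_contra! hD
  obtain ⟨D', hbD', hD'D⟩ := exists_between hD
  have hD' : 0 < D' := (div_nonneg hb ha.le).trans_lt hbD'
  have hslope : 0 < D' * a - b := by linarith [(div_lt_iff₀ ha).1 hbD']
  obtain ⟨δ₀, hδ₀, hratio⟩ :=
    mem_nhdsGT_iff_exists_Ioo_subset.1 (hm.eventually (lt_mem_nhds hD'D))
  set δ₁ := min δ₀ 1
  have hδ₁ : 0 < δ₁ := lt_min hδ₀ one_pos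
  have hlarge (M : ℝ) : ∀ᶠ k : ℕ in atTop, M < k :=
    tendsto_natCast_atTop_atTop.eventually_gt_atTop M
  obtain ⟨k, ⟨s, hs, hsC, hms⟩, hk₁, hk₂⟩ := (hfreq.and_eventually
    ((hlarge ((C - Real.logb 2 δ₁) / a)).and (hlarge ((C + D' * C) / (D' * a - b))))).exists
  rw [div_lt_iff₀ ha] at hk₁
  rw [div_lt_iff₀ hslope] at hk₂
  have hsδ₁ : s < δ₁ := (Real.logb_lt_logb_iff one_lt_two hs hδ₁).1 (by linarith)
  have hlogs : Real.logb 2 s < 0 :=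
    Real.logb_neg one_lt_two hs (hsδ₁.trans_le (min_le_right _ _))
  have hms' := (lt_div_iff_of_neg hlogs).1 (hratio ⟨hs, hsδ₁.trans_le (min_le_left _ _)⟩)
  nlinarith [mul_le_mul_of_nonneg_left hsC hD'.le]

section FiberWeight

variable [Fintype J] {β : Type*}

open Classical in
/-- The mass of the atom `g j` under the law of `g` with respect to `P`; for the maps `φ_{t,w}`
this is `ν_t^{(n)}({φ_{t,w}})`. -/
noncomputable def fiberWeight (P : J → ℝ) (g : J → β) (j : J) : ℝ :=
  ∑ j' with g j' = g j, P j'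

theorem fiberWeight_pos {P : J → ℝ} (hP : ∀ j, 0 < P j) (g : J → β) (j : J) :
    0 < fiberWeight P g j :=
  sum_pos (fun j' _ => hP j') ⟨j, by simp⟩

theorem fiberWeight_le_one {P : J → ℝ} (hP : ∀ j, 0 ≤ P j) (hP1 : ∑ j, P j = 1) (g : J → β)
    (j : J) : fiberWeight P g j ≤ 1 := by
  classical
  exact hP1 ▸ sum_le_sum_of_subset_of_nonneg (filter_subset _ _) fun j' _ _ => hP j'

theorem sum_mul_logb_fiberWeight (P : J → ℝ) (g : J → β) :
    ∑ j, P j * Real.logb 2 (fiberWeight P g j) = -pushEntropy P g := by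
  classical
  rw [pushEntropy, sum_neg_distrib, neg_neg,
    ← sum_fiberwise_of_maps_to (g := g) (t := univ.image g) fun j _ =>
      mem_image_of_mem g (mem_univ j)]
  refine sum_congr rfl fun b _ => ?_
  rw [sum_mul]
  refine sum_congr rfl fun j hj => ?_
  rw [(mem_filter.1 hj).2.symm]
  simp only [fiberWeight]

theorem pushEntropy_nonneg {P : J → ℝ} (hP : ∀ j, 0 < P j) (hP1 : ∑ j, P j = 1) (g : J → β) :
    0 ≤ pushEntropy P g := by
  rw [← neg_nonpos, ← sum_mul_logb_fiberWeight]
  exact sum_nonpos fun j _ => mul_nonpos_of_nonneg_of_nonpos (hP j).le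
    (Real.logb_nonpos one_lt_two (fiberWeight_pos hP g j).le
      (fiberWeight_le_one (fun j => (hP j).le) hP1 g j))

theorem ofReal_fiberWeight_mul_measure_preimage_le [MeasurableSpace E] {μ : Measure E}
    {P : J → ℝ} (hP : ∀ j, 0 ≤ P j) {g : J → E → E} (hg : ∀ j, Measurable (g j))
    (hμ : μ = ∑ j, ENNReal.ofReal (P j) • μ.map (g j)) (j : J) {S : Set E}
    (hS : MeasurableSet S) : ENNReal.ofReal (fiberWeight P g j) * μ (g j ⁻¹' S) ≤ μ S := by
  classical
  rw [measure_eq_sum_preimage hg hμ hS, fiberWeight,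
    ENNReal.ofReal_sum_of_nonneg fun j' _ => hP j', sum_mul]
  calc ∑ j' with g j' = g j, ENNReal.ofReal (P j') * μ (g j ⁻¹' S)
      = ∑ j' with g j' = g j, ENNReal.ofReal (P j') * μ (g j' ⁻¹' S) :=
        sum_congr rfl fun j' hj' => by rw [(mem_filter.1 hj').2]
    _ ≤ _ := sum_le_sum_of_subset (filter_subset _ _)

end FiberWeight

section Dimension

variable [PseudoMetricSpace E] [MeasurableSpace E] [BorelSpace E] {μ : Measure E} {g : J → E → E}
  {r : J → ℝ}

theorem add_logb_measure_closedBall_le_logb_measure_ball [IsFiniteMeasure μ] {Q : J → ℝ}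
    (hQ : ∀ j, 0 < Q j) (hr : ∀ j, 0 < r j) (hg : ∀ j x y, dist (g j x) (g j y) = r j * dist x y)
    (hQg : ∀ j {S : Set E}, MeasurableSet S → ENNReal.ofReal (Q j) * μ (g j ⁻¹' S) ≤ μ S)
    {k : ℕ} (σ : Fin k → J) {x x₀ : E} {R : ℝ} (hR : 0 < R) (hR₀ : μ (Metric.closedBall x₀ R) ≠ 0)
    (hx : dist x (wordComp g σ x₀) ≤ R * ∏ i, r (σ i)) :
    ∑ i, Real.logb 2 (Q (σ i)) + Real.logb 2 (μ (Metric.closedBall x₀ R)).toReal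
      ≤ Real.logb 2 (μ (Metric.ball x (3 * R * ∏ i, r (σ i)))).toReal := by
  have hQσ : 0 < ∏ i, Q (σ i) := prod_pos fun i _ => hQ _
  have hle : ENNReal.ofReal (∏ i, Q (σ i)) * μ (Metric.closedBall x₀ R)
      ≤ μ (Metric.ball x (3 * R * ∏ i, r (σ i))) :=
    (mul_le_mul_right (measure_mono (closedBall_subset_preimage_ball (dist_wordComp hg σ)
      (prod_pos fun i _ => hr _) hR hx)) _).trans
      (ofReal_prod_mul_measure_preimage_wordComp_le (fun j => (hQ j).le)
        (fun j => (continuous_of_dist_eq_mul (hg j)).measurable) hQg σ measurableSet_ball)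
  have hle' := ENNReal.toReal_mono (measure_ne_top _ _) hle
  rw [ENNReal.toReal_mul, ENNReal.toReal_ofReal hQσ.le] at hle'
  have hB : 0 < (μ (Metric.closedBall x₀ R)).toReal :=
    ENNReal.toReal_pos hR₀ (measure_ne_top _ _)
  rw [← Real.logb_prod _ _ fun i _ => (hQ _).ne', ← Real.logb_mul hQσ.ne' hB.ne']
  exact Real.logb_le_logb_of_le one_lt_two (mul_pos hQσ hB) hle'

variable [Fintype J] {P : J → ℝ}

theorem ofReal_sum_prod_mul_measure_closedBall_le (hP : ∀ j, 0 ≤ P j) (hr : ∀ j, 0 ≤ r j)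
    (hg : ∀ j x y, dist (g j x) (g j y) = r j * dist x y)
    (hμ : μ = ∑ j, ENNReal.ofReal (P j) • μ.map (g j)) {k : ℕ} (G : Finset (Fin k → J))
    (x₀ : E) (R : ℝ) :
    ENNReal.ofReal (∑ σ ∈ G, ∏ i, P (σ i)) * μ (Metric.closedBall x₀ R)
      ≤ μ (⋃ σ ∈ G, Metric.closedBall (wordComp g σ x₀) (R * ∏ i, r (σ i))) := by
  rw [ENNReal.ofReal_sum_of_nonneg fun σ _ => prod_nonneg fun i _ => hP _]
  refine mul_measure_le_measure_biUnion (fun S hS => measure_eq_sum_preimage_wordComp hP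
    (fun j => (continuous_of_dist_eq_mul (hg j)).measurable) hμ k hS) G
    (fun σ => Metric.isClosed_closedBall.measurableSet) fun σ _ y hy => ?_
  rw [Set.mem_preimage, Metric.mem_closedBall, dist_wordComp hg, mul_comm R]
  exact mul_le_mul_of_nonneg_left hy (prod_nonneg fun i _ => hr _)

variable [IsProbabilityMeasure μ] {D : ℝ}

theorem le_add_div_sub_of_selfSimilar (hP : ∀ j, 0 < P j) (hP1 : ∑ j, P j = 1)
    (hr : ∀ j, 0 < r j) (hg : ∀ j x y, dist (g j x) (g j y) = r j * dist x y)
    (hμ : μ = ∑ j, ENNReal.ofReal (P j) • μ.map (g j))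
    (hdim : ∀ᵐ x ∂μ, Tendsto (fun δ => Real.logb 2 (μ (Metric.ball x δ)).toReal / Real.logb 2 δ)
      (𝓝[>] 0) (𝓝 D))
    {ε : ℝ} (hε : 0 < ε) (hεL : ε < -∑ j, P j * Real.logb 2 (r j)) :
    D ≤ (pushEntropy P g + ε) / (-∑ j, P j * Real.logb 2 (r j) - ε) := by
  classical
  set Q := fiberWeight P g
  have hgm (j : J) : Measurable (g j) := (continuous_of_dist_eq_mul (hg j)).measurable
  set G : (k : ℕ) → Finset (Fin k → J) := fun k =>
    typicalWords P (fun j => Real.logb 2 (Q j)) k ε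
      ∩ typicalWords P (fun j => Real.logb 2 (r j)) k ε
  obtain ⟨x₀, R, hR, hR₀⟩ := exists_lt_measure_closedBall (μ := μ) (c := 2⁻¹) (by simp)
  set S : ℕ → Set E := fun k =>
    ⋃ σ ∈ G k, Metric.closedBall (wordComp g σ x₀) (R * ∏ i, r (σ i))
  have hS : ∀ᶠ k in atTop, 2⁻¹ * 2⁻¹ ≤ μ (S k) := by
    filter_upwards [(tendsto_sum_prod_inter_typicalWords (fun j => (hP j).le) hP1 _ _ hε).eventually
      (lt_mem_nhds (by norm_num : (2⁻¹ : ℝ) < 1))] with k hk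
    refine le_trans ?_ (ofReal_sum_prod_mul_measure_closedBall_le (fun j => (hP j).le)
      (fun j => (hr j).le) hg hμ (G k) x₀ R)
    gcongr
    simpa using ENNReal.ofReal_le_ofReal hk.le
  obtain ⟨x, hx, hfreq⟩ := exists_frequently_mem_of_ae
    (fun k => (G k).measurableSet_biUnion fun σ _ => Metric.isClosed_closedBall.measurableSet)
    (by simp) hS hdim
  refine le_div_of_frequently_logb_le (C := max (Real.logb 2 (3 * R)) 1) hx (sub_pos.2 hεL)
    (add_nonneg (pushEntropy_nonneg hP hP1 g) hε.le) (hfreq.mono fun k hk => ?_)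
  obtain ⟨σ, hσ, hxσ⟩ : ∃ σ ∈ G k, dist x (wordComp g σ x₀) ≤ R * ∏ i, r (σ i) := by
    simpa [S] using hk
  obtain ⟨hσQ, hσr⟩ := mem_inter.1 hσ
  rw [mem_typicalWords, sum_mul_logb_fiberWeight] at hσQ
  rw [mem_typicalWords] at hσr
  have hρ : 0 < ∏ i, r (σ i) := prod_pos fun i _ => hr _
  refine ⟨3 * R * ∏ i, r (σ i), by positivity, ?_, ?_⟩
  · rw [Real.logb_mul (by positivity) hρ.ne', Real.logb_prod _ _ fun i _ => (hr _).ne']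
    linarith [(abs_le.1 hσr).2, le_max_left (Real.logb 2 (3 * R)) 1]
  · have hball := add_logb_measure_closedBall_le_logb_measure_ball (fiberWeight_pos hP g)
      hr hg (ofReal_fiberWeight_mul_measure_preimage_le (fun j => (hP j).le) hgm hμ) σ hR
      (ne_bot_of_gt hR₀) hxσ
    have hhalf : -1 ≤ Real.logb 2 (μ (Metric.closedBall x₀ R)).toReal := by
      have h := ENNReal.toReal_mono (measure_ne_top _ _) hR₀.le
      rw [ENNReal.toReal_inv, ENNReal.toReal_ofNat] at h
      calc -1 = Real.logb 2 2⁻¹ := by simp [Real.logb_inv]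
        _ ≤ _ := Real.logb_le_logb_of_le one_lt_two (by norm_num) h
    linarith [(abs_le.1 hσQ).1, le_max_right (Real.logb 2 (3 * R)) 1]

theorem le_pushEntropy_div_of_selfSimilar (hP : ∀ j, 0 < P j) (hP1 : ∑ j, P j = 1)
    (hr : ∀ j, 0 < r j) (hg : ∀ j x y, dist (g j x) (g j y) = r j * dist x y)
    (hL : 0 < -∑ j, P j * Real.logb 2 (r j))
    (hμ : μ = ∑ j, ENNReal.ofReal (P j) • μ.map (g j))
    (hdim : ∀ᵐ x ∂μ, Tendsto (fun δ => Real.logb 2 (μ (Metric.ball x δ)).toReal / Real.logb 2 δ)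
      (𝓝[>] 0) (𝓝 D)) :
    D ≤ pushEntropy P g / (-∑ j, P j * Real.logb 2 (r j)) := by
  set L := -∑ j, P j * Real.logb 2 (r j)
  have hlim : Tendsto (fun ε => (pushEntropy P g + ε) / (L - ε)) (𝓝[>] 0)
      (𝓝 (pushEntropy P g / L)) := by
    have hcont : ContinuousAt (fun ε => (pushEntropy P g + ε) / (L - ε)) 0 :=
      (continuousAt_const.add continuousAt_id).div (continuousAt_const.sub continuousAt_id)
        (by simpa using hL.ne')
    simpa using hcont.tendsto.mono_left nhdsWithin_le_nhds
  refine ge_of_tendsto hlim ?_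
  filter_upwards [Ioo_mem_nhdsGT hL] with ε hε
  exact le_add_div_sub_of_selfSimilar hP hP1 hr hg hμ hdim hε.1 hε.2

end Dimension

end SelfSimilar

open SelfSimilar in
theorem stmt10_general (d m : ℕ)
    (lam : Fin (m + 1) → ℝ) (hlam : ∀ j, lam j ≠ 0 ∧ |lam j| < 1)
    (p : Fin (m + 1) → ℝ) (hp : ∀ j, 0 < p j) (hp1 : ∑ j, p j = 1)
    (t : Fin m → Fin d → ℝ) (χ : ℝ) (hχ : χ = -∑ j, p j * Real.logb 2 |lam j|)
    (μ : Measure (Fin d → ℝ)) [IsProbabilityMeasure μ]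
    (hss : μ = ∑ j, ENNReal.ofReal (p j) •
      Measure.map (fun x => lam j • x + Fin.cases 0 t j) μ)
    (D : ℝ)
    (hdim : ∀ᵐ x ∂μ, Filter.Tendsto
      (fun δ : ℝ => Real.logb 2 (μ (Metric.ball x δ)).toReal / Real.logb 2 δ)
      (nhdsWithin 0 (Set.Ioi 0)) (nhds D)) :
    ∀ n : ℕ, 1 ≤ n →
      D ≤ (1 / (χ * n)) *
        pushEntropy (fun w : Fin n → Fin (m + 1) => ∏ i, p (w i))
          (fun w => compIFSd lam t w) := by
  intro n hn
  set φ : Fin (m + 1) → (Fin d → ℝ) → Fin d → ℝ := fun j x => lam j • x + Fin.cases 0 t j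
  have hφ (j : Fin (m + 1)) (x y : Fin d → ℝ) : dist (φ j x) (φ j y) = |lam j| * dist x y := by
    simp only [φ, dist_add_right, dist_smul₀, Real.norm_eq_abs]
  have hχ_pos : 0 < χ := by
    rw [hχ, neg_pos]
    exact Finset.sum_neg (fun j _ => mul_neg_of_pos_of_neg (hp j)
      (Real.logb_neg one_lt_two (abs_pos.2 (hlam j).1) (hlam j).2)) Finset.univ_nonempty
  have hL : -∑ w : Fin n → Fin (m + 1), (∏ i, p (w i)) * Real.logb 2 (∏ i, |lam (w i)|)
      = n * χ := by
    simp_rw [Real.logb_prod _ _ fun i _ => abs_ne_zero.2 (hlam _).1]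
    rw [sum_prod_mul_sum hp1 fun j => Real.logb 2 |lam j|, hχ]
    ring
  have key := le_pushEntropy_div_of_selfSimilar (g := fun w => compIFSd lam t w)
    (fun w => Finset.prod_pos fun i _ => hp (w i)) (sum_prod_eq_one hp1 n)
    (fun w => Finset.prod_pos fun i _ => abs_pos.2 (hlam (w i)).1) (fun w => dist_wordComp hφ w)
    (by rw [hL]; exact mul_pos (by exact_mod_cast hn) hχ_pos)
    (eq_sum_map_wordComp (fun j => (hp j).le)
      (fun j => (continuous_of_dist_eq_mul (hφ j)).measurable) hss n) hdim
  rwa [hL, mul_comm, ← one_div_mul_eq_div] at key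

theorem stmt10 (d m : ℕ) (hd : 1 ≤ d) (hm : 1 ≤ m)
    (lam : Fin (m + 1) → ℝ) (hlam : ∀ j, lam j ≠ 0 ∧ |lam j| < 1)
    (p : Fin (m + 1) → ℝ) (hp : ∀ j, 0 < p j) (hp1 : ∑ j, p j = 1)
    (t : Fin m → Fin d → ℝ) (χ : ℝ) (hχ : χ = -∑ j, p j * Real.logb 2 |lam j|)
    (μ : Measure (Fin d → ℝ)) [IsProbabilityMeasure μ]
    (hss : μ = ∑ j, ENNReal.ofReal (p j) •
      Measure.map (fun x => lam j • x + Fin.cases 0 t j) μ)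
    (D : ℝ)
    (hdim : ∀ᵐ x ∂μ, Filter.Tendsto
      (fun δ : ℝ => Real.logb 2 (μ (Metric.ball x δ)).toReal / Real.logb 2 δ)
      (nhdsWithin 0 (Set.Ioi 0)) (nhds D)) :
    ∀ n : ℕ, 1 ≤ n →
      D ≤ (1 / (χ * n)) *
        pushEntropy (fun w : Fin n → Fin (m + 1) => ∏ i, p (w i))
          (fun w => compIFSd lam t w) :=
  stmt10_general d m lam hlam p hp hp1 t χ hχ μ hss D hdim
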